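/- arXiv:2107.14247 — 3 statements merged into one kernel-verified Lean document; each statement's English description precedes it below -/
import Mathlib

section
/- Given a commutative diagram of modules over a principal ideal domain with objects A_{1,1} → A_{1,2}, A_{2,1} → A_{2,2} → A_{2,3}, A_{3,2} → A_{3,3}, and vertical maps A_{2,1} → A_{1,1}, A_{2,2} → A_{1,2}, A_{3,2} → A_{2,2}, A_{3,3} → A_{2,3}, such that the middle row A_{2,1} → A_{2,2} → A_{2,3} is exact, if the images of A_{2,1} → A_{1,1} and A_{3,3} → A_{2,3} are finitely generated, then the image of the composite A_{3,2} → A_{2,2} → A_{1,2} is finitely generated. -/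
lemma fg_of_le_fg {R M : Type*} [CommRing R] [IsNoetherianRing R]
    [AddCommGroup M] [Module R M] {N T : Submodule R M} (hT : T.FG) (h : N ≤ T) : N.FG := by
  haveI : IsNoetherian R T := isNoetherian_of_fg_of_noetherian T hT
  have := (IsNoetherian.noetherian (N.comap T.subtype)).map T.subtype
  rwa [Submodule.map_comap_subtype, inf_of_le_right h] at this

/-- diagram-chase lemma (Lemma `l:commutative algebra`). -/
theorem stmt_0 (R : Type*) [CommRing R] [IsDomain R] [IsPrincipalIdealRing R]
    (A11 A12 A21 A22 A23 A32 A33 : Type*)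
    [AddCommGroup A11] [Module R A11] [AddCommGroup A12] [Module R A12]
    [AddCommGroup A21] [Module R A21] [AddCommGroup A22] [Module R A22]
    [AddCommGroup A23] [Module R A23] [AddCommGroup A32] [Module R A32]
    [AddCommGroup A33] [Module R A33]
    (f11 : A11 →ₗ[R] A12) (f21 : A21 →ₗ[R] A22) (f22 : A22 →ₗ[R] A23)
    (f32 : A32 →ₗ[R] A33)
    (v21 : A21 →ₗ[R] A11) (v22 : A22 →ₗ[R] A12) (v32 : A32 →ₗ[R] A22)
    (v33 : A33 →ₗ[R] A23)
    (hsq1 : v22 ∘ₗ f21 = f11 ∘ₗ v21)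
    (hsq2 : v33 ∘ₗ f32 = f22 ∘ₗ v32)
    (hexact : LinearMap.range f21 = LinearMap.ker f22)
    (h1 : (LinearMap.range v21).FG)
    (h2 : (LinearMap.range v33).FG) :
    (LinearMap.range (v22 ∘ₗ v32)).FG := by
  haveI : IsNoetherianRing R := PrincipalIdealRing.isNoetherianRing
  have hsub : LinearMap.range (f22 ∘ₗ v32) ≤ LinearMap.range v33 := by
    rw [← hsq2]
    rintro x ⟨a, rfl⟩
    exact ⟨f32 a, rfl⟩
  obtain ⟨s, hs⟩ : (LinearMap.range (f22 ∘ₗ v32)).FG := fg_of_le_fg h2 hsub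
  have hpre : ∀ x ∈ s, ∃ a : A32, f22 (v32 a) = x := by
    intro x hx
    have : x ∈ LinearMap.range (f22 ∘ₗ v32) := hs ▸ Submodule.subset_span hx
    obtain ⟨a, ha⟩ := this
    exact ⟨a, ha⟩
  choose pre hpre' using hpre
  set T : Submodule R A12 :=
    Submodule.span R (Set.range (fun x : s => v22 (v32 (pre x.1 x.2)))) ⊔
      Submodule.map f11 (LinearMap.range v21) with hT
  have hTfg : T.FG := by
    apply Submodule.FG.sup
    · exact Submodule.fg_span (Set.finite_range _)
    · exact h1.map f11
  apply fg_of_le_fg hTfg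
  rintro y ⟨a, rfl⟩
  simp only [LinearMap.comp_apply]
  have h3 : f22 (v32 a) ∈ Submodule.span R (s : Set A23) := by
    rw [hs]; exact ⟨a, rfl⟩
  obtain ⟨c, -, hc⟩ := Submodule.mem_span_finset.mp h3
  -- z is a combination of preimages
  set z : A32 := ∑ i ∈ s.attach, c i.1 • pre i.1 i.2 with hz
  have hfz : f22 (v32 z) = f22 (v32 a) := by
    rw [hz, map_sum, map_sum]
    simp only [map_smul, hpre']
    rw [← hc, ← Finset.sum_attach s (fun i => c i • i)]
  have hker : v32 (a - z) ∈ LinearMap.ker f22 := by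
    simp [map_sub, hfz]
  rw [← hexact] at hker
  obtain ⟨w, hw⟩ := hker
  have key : v22 (v32 a) = v22 (v32 z) + f11 (v21 w) := by
    have : v22 (f21 w) = f11 (v21 w) := congrFun (congrArg DFunLike.coe hsq1) w
    rw [← this, hw, map_sub, map_sub]
    abel
  rw [key]
  apply Submodule.add_mem
  · apply Submodule.mem_sup_left
    rw [hz, map_sum, map_sum]
    apply Submodule.sum_mem
    intro i _
    simp only [map_smul]
    exact Submodule.smul_mem _ _ (Submodule.subset_span ⟨i, rfl⟩)
  · exact Submodule.mem_sup_right ⟨v21 w, ⟨w, rfl⟩, rfl⟩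
end

section
/- Let f : X → ℝ be a continuous function whose sublevel set filtration is weakly locally homologically small with respect to a homology functor H. Then the sublevel set filtration of f is locally homologically small. -/
open CategoryTheory

/-- HS: the induced map on `H` has finite-dimensional image. -/
def IsHS {F : Type} [Field F] (H : TopCat.{0} ⥤ ModuleCat.{0} F)
    {A B : TopCat.{0}} (φ : A ⟶ B) : Prop :=
  Module.Finite F (LinearMap.range (H.map φ).hom)

/-- The inclusion of subspaces as a morphism in `TopCat`. -/
def subIncl {X : Type} [TopologicalSpace X] {A B : Set X} (h : A ⊆ B) :
    TopCat.of A ⟶ TopCat.of B :=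
  TopCat.ofHom ⟨Set.inclusion h, continuous_inclusion h⟩

/-- The sublevel set `f_{≤ t}`. -/
def sublevel {X : Type} (f : X → ℝ) (t : ℝ) : Set X := f ⁻¹' Set.Iic t

/-- The sublevel set filtration of `f` is locally homologically small (LHS). -/
def IsLHS {F : Type} [Field F] (H : TopCat.{0} ⥤ ModuleCat.{0} F)
    {X : Type} [TopologicalSpace X] (f : X → ℝ) : Prop :=
  ∀ x : X, ∀ V ∈ nhds x, ∀ s t : ℝ, f x < s → ∀ hst : s < t,
    ∃ U ∈ nhds x, ∃ hUV : U ⊆ V,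
      IsHS H (subIncl (show sublevel f s ∩ U ⊆ sublevel f t ∩ V from
        Set.inter_subset_inter (fun y hy => le_trans hy hst.le) hUV))

/-- The sublevel set filtration of `f` is weakly locally homologically small. -/
def IsWeakLHS {F : Type} [Field F] (H : TopCat.{0} ⥤ ModuleCat.{0} F)
    {X : Type} [TopologicalSpace X] (f : X → ℝ) : Prop :=
  ∀ x : X, ∀ V ∈ nhds x, ∀ t : ℝ, f x < t →
    ∃ s : ℝ, f x < s ∧ ∃ hst : s < t, ∃ U ∈ nhds x, ∃ hUV : U ⊆ V,
      IsHS H (subIncl (show sublevel f s ∩ U ⊆ sublevel f t ∩ V from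
        Set.inter_subset_inter (fun y hy => le_trans hy hst.le) hUV))

/-- Precomposing an HS map with any map yields an HS map. -/
lemma isHS_comp {F : Type} [Field F] (H : TopCat.{0} ⥤ ModuleCat.{0} F)
    {A B C : TopCat.{0}} (φ : A ⟶ B) (ψ : B ⟶ C) (h : IsHS H ψ) :
    IsHS H (φ ≫ ψ) := by
  unfold IsHS at *
  rw [H.map_comp]
  have hle : LinearMap.range (H.map φ ≫ H.map ψ).hom ≤ LinearMap.range (H.map ψ).hom := by
    rintro y ⟨z, rfl⟩
    exact ⟨(H.map φ).hom z, rfl⟩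
  haveI : FiniteDimensional F (LinearMap.range (H.map ψ).hom) := h
  exact Submodule.finiteDimensional_of_le hle

lemma subIncl_trans {X : Type} [TopologicalSpace X] {A B C : Set X}
    (h1 : A ⊆ B) (h2 : B ⊆ C) :
    subIncl (h1.trans h2) = subIncl h1 ≫ subIncl h2 := rfl

/-- for continuous functions, weakly LHS implies LHS. -/
theorem stmt_2 {F : Type} [Field F] (H : TopCat.{0} ⥤ ModuleCat.{0} F)
    {X : Type} [TopologicalSpace X] (f : X → ℝ) (hf : Continuous f)
    (hweak : IsWeakLHS H f) : IsLHS H f := by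
  intro x V hV s t hxs hst
  obtain ⟨s', hxs', hs't, U, hU, hUV, hHS⟩ := hweak x V hV t (hxs.trans hst)
  -- shrink U so that f < s' there
  refine ⟨U ∩ f ⁻¹' Set.Iio s', ?_, fun y hy => hUV hy.1, ?_⟩
  · exact Filter.inter_mem hU (hf.continuousAt.preimage_mem_nhds (Iio_mem_nhds hxs'))
  · have h1 : sublevel f s ∩ (U ∩ f ⁻¹' Set.Iio s') ⊆ sublevel f s' ∩ U :=
      fun y hy => ⟨show f y ≤ s' from le_of_lt hy.2.2, hy.2.1⟩
    have h2 : sublevel f s' ∩ U ⊆ sublevel f t ∩ V :=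
      Set.inter_subset_inter (fun y hy => le_trans hy hs't.le) hUV
    have : subIncl (show sublevel f s ∩ (U ∩ f ⁻¹' Set.Iio s') ⊆ sublevel f t ∩ V from
        Set.inter_subset_inter (fun y hy => le_trans hy hst.le) (fun y hy => hUV hy.1))
        = subIncl h1 ≫ subIncl h2 := rfl
    rw [this]
    exact isHS_comp H _ _ hHS
end

section
/- The interval persistence module C(I) associated to a nonempty interval I ⊆ ℝ is indecomposable: if C(I) ≅ M ⊕ N as persistence modules, then M or N is the zero persistence module. -/
/-- The underlying space of the interval module `C(I)` at `t`: the field `F` if `t ∈ I`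
and `0` otherwise, realized as a submodule of `F`. -/
noncomputable def CIsub (F : Type*) [Field F] (I : Set ℝ) (t : ℝ) : Submodule F F :=
  open Classical in if t ∈ I then ⊤ else ⊥

/-- The structure map of the interval module `C(I)`: the identity if `s, t ∈ I`
and zero otherwise. -/
noncomputable def CImap (F : Type*) [Field F] (I : Set ℝ) (s t : ℝ) :
    CIsub F I s →ₗ[F] CIsub F I t where
  toFun x := open Classical in
    if h : t ∈ I then ⟨x.1, by simp [CIsub, h]⟩ else 0
  map_add' x y := by
    split_ifs with h
    · apply Subtype.ext; simp
    · simp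
    all_goals first | exact (add_zero _).symm | (apply Subtype.ext; simp) | rfl
  map_smul' c x := by
    split_ifs with h
    · apply Subtype.ext; simp
    · simp
    all_goals first | exact (smul_zero _).symm | (apply Subtype.ext; simp) | rfl

/-- the interval module `C(I)` of a nonempty interval `I` is
indecomposable: if `C(I)` is isomorphic, as a persistence module, to a direct sum
`M ⊕ N`, then `M` or `N` is the zero persistence module. -/
theorem stmt_6 (F : Type*) [Field F] (I : Set ℝ) (hne : I.Nonempty)
    (hconv : I.OrdConnected)
    (M N : ℝ → Type*)
    [∀ t, AddCommGroup (M t)] [∀ t, Module F (M t)]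
    [∀ t, AddCommGroup (N t)] [∀ t, Module F (N t)]
    (Mmap : ∀ s t : ℝ, s ≤ t → (M s →ₗ[F] M t))
    (Nmap : ∀ s t : ℝ, s ≤ t → (N s →ₗ[F] N t))
    (hMid : ∀ t, Mmap t t le_rfl = LinearMap.id)
    (hNid : ∀ t, Nmap t t le_rfl = LinearMap.id)
    (hMcomp : ∀ r s t : ℝ, ∀ (h1 : r ≤ s) (h2 : s ≤ t),
      (Mmap s t h2).comp (Mmap r s h1) = Mmap r t (h1.trans h2))
    (hNcomp : ∀ r s t : ℝ, ∀ (h1 : r ≤ s) (h2 : s ≤ t),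
      (Nmap s t h2).comp (Nmap r s h1) = Nmap r t (h1.trans h2))
    (e : ∀ t, CIsub F I t ≃ₗ[F] (M t × N t))
    (hnat : ∀ s t : ℝ, ∀ h : s ≤ t, ∀ x : CIsub F I s,
      e t (CImap F I s t x) = (Mmap s t h (e s x).1, Nmap s t h (e s x).2)) :
    (∀ t, ∀ m : M t, m = 0) ∨ (∀ t, ∀ n : N t, n = 0) := by

  by_contra hcon
  push_neg at hcon
  obtain ⟨⟨s, m, hm⟩, ⟨t, n, hn⟩⟩ := hcon
  -- Outside I, everything is zero
  have zero_outside : ∀ u, u ∉ I → ∀ v : M u × N u, v = 0 := by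
    intro u hu v
    have hx : (e u).symm v = 0 := by
      apply Subtype.ext
      have h2 := ((e u).symm v).2
      simp only [CIsub, if_neg hu, Submodule.mem_bot] at h2
      exact h2
    have := congrArg (e u) hx
    rwa [(e u).apply_symm_apply, map_zero] at this
  -- At each point of I, M and N cannot both be nonzero
  have pt : ∀ u, u ∈ I → ∀ (m' : M u) (n' : N u), m' ≠ 0 → n' ≠ 0 → False := by
    intro u hu m' n' hm' hn'
    set x := (e u).symm (m', 0) with hxdef
    set y := (e u).symm (0, n') with hydef
    have hy1 : (y : F) ≠ 0 := by
      intro h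
      have : y = 0 := Subtype.ext h
      have := congrArg (e u) this
      rw [(e u).apply_symm_apply, map_zero] at this
      exact hn' (congrArg Prod.snd this)
    have hz : (y : F) • x - (x : F) • y = 0 := by
      apply Subtype.ext
      simp [mul_comm]
    have := congrArg (e u) hz
    rw [map_sub, map_smul, map_smul, (e u).apply_symm_apply,
      (e u).apply_symm_apply, map_zero] at this
    have h1 : (y : F) • m' - (x : F) • (0 : M u) = 0 := congrArg Prod.fst this
    rw [smul_zero, sub_zero] at h1
    rcases smul_eq_zero.mp h1 with h | h
    · exact hy1 h
    · exact hm' h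
  have hsI : s ∈ I := by
    by_contra hs
    exact hm (congrArg Prod.fst (zero_outside s hs (m, 0)))
  have htI : t ∈ I := by
    by_contra ht
    exact hn (congrArg Prod.snd (zero_outside t ht (0, n)))
  rcases le_total s t with hst | hts
  · -- push m forward to time t
    set x := (e s).symm (m, 0) with hxdef
    have hx1 : (x : F) ≠ 0 := by
      intro h
      have : x = 0 := Subtype.ext h
      have := congrArg (e s) this
      rw [(e s).apply_symm_apply, map_zero] at this
      exact hm (congrArg Prod.fst this)
    have hC : CImap F I s t x ≠ 0 := by
      intro h
      have := congrArg (Subtype.val) h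
      simp only [CImap, LinearMap.coe_mk, AddHom.coe_mk, dif_pos htI] at this
      exact hx1 this
    have hE : e t (CImap F I s t x) ≠ 0 := by
      intro h
      exact hC ((e t).map_eq_zero_iff.mp h)
    rw [hnat s t hst x, (e s).apply_symm_apply] at hE
    simp only [map_zero] at hE
    have hMne : Mmap s t hst m ≠ 0 := by
      intro h
      apply hE
      rw [h]
      rfl
    exact (pt t htI (Mmap s t hst m) n hMne hn).elim
  · -- push n forward to time s
    set x := (e t).symm (0, n) with hxdef
    have hx1 : (x : F) ≠ 0 := by
      intro h
      have : x = 0 := Subtype.ext h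
      have := congrArg (e t) this
      rw [(e t).apply_symm_apply, map_zero] at this
      exact hn (congrArg Prod.snd this)
    have hC : CImap F I t s x ≠ 0 := by
      intro h
      have := congrArg (Subtype.val) h
      simp only [CImap, LinearMap.coe_mk, AddHom.coe_mk, dif_pos hsI] at this
      exact hx1 this
    have hE : e s (CImap F I t s x) ≠ 0 := by
      intro h
      exact hC ((e s).map_eq_zero_iff.mp h)
    rw [hnat t s hts x, (e t).apply_symm_apply] at hE
    simp only [map_zero] at hE
    have hNne : Nmap t s hts n ≠ 0 := by
      intro h
      apply hE
      rw [h]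
      rfl
    exact (pt s hsI m (Nmap t s hts n) hm hNne).elim
end
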